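/- arXiv:1711.01156 — 3 statements merged into one kernel-verified Lean document; each statement's English description precedes it below -/
import Mathlib

section
/- Let t, t' : Fin n → k and let D, D' : A → A be k-linear maps satisfying the graded Leibniz rule with D(x_i) = x_i * w_t and D'(x_i) = x_i * w_{t'} for all i ∈ Fin n. Then there exists a k-algebra automorphism f : A ≃ₐ[k] A with each f(x_i) homogeneous of degree 1 and f ∘ D = D' ∘ f if and only if (t = 0 ↔ t' = 0). In particular, up to DG isomorphism there are exactly two DG polynomial algebras: the one with t = 0 and the one with t = (1,0,…,0). -/
/-!
The graded Leibniz rule says that `D` is a derivation twisted by the sign involution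
`σ : x_i ↦ -x_i` (on a homogeneous `a` of degree `d`, `σ a = (-1)^d a`). The map
`a ↦ w_t * (a - σ a)` is another such twisted derivation, and the two agree with `2 • D` on the
variables, so `2 • D a = w_t * (a - σ a)` for all `a`.

An automorphism `f` sending each `x_i` to a linear form commutes with `σ`, so by this formula
`f ∘ D = D' ∘ f` as soon as `f w_t = w_{t'}`; conversely, evaluating `f ∘ D = D' ∘ f` on a
variable gives `f x_i * f w_t = f x_i * w_{t'}`, hence `f w_t = w_{t'}`. Thus a DG isomorphism
exists iff some linear change of variables maps `w_t` to `w_{t'}`, i.e. iff some linear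
automorphism of `kⁿ` maps `t` to `t'`, which happens iff `t` and `t'` are both zero or both not.
-/

theorem exists_linearEquiv_apply_eq_of_eq_zero_iff {K V : Type*} [Field K] [AddCommGroup V]
    [Module K V] {x y : V} (h : x = 0 ↔ y = 0) : ∃ g : V ≃ₗ[K] V, g x = y := by
  by_cases hx : x = 0
  · exact ⟨LinearEquiv.refl K V, by simp [hx, h.mp hx]⟩
  · obtain ⟨g, hg⟩ := Submodule.exists_linearEquiv_restrict_eq
      ((LinearEquiv.toSpanNonzeroSingleton K V x hx).symm ≪≫ₗ
        LinearEquiv.toSpanNonzeroSingleton K V y (mt h.mpr hx))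
    refine ⟨g, ?_⟩
    have hx1 : (LinearEquiv.toSpanNonzeroSingleton K V x hx).symm
        ⟨x, Submodule.mem_span_singleton_self x⟩ = 1 := by
      rw [LinearEquiv.symm_apply_eq, LinearEquiv.toSpanNonzeroSingleton_one]
    simpa [hx1] using (hg ⟨x, Submodule.mem_span_singleton_self x⟩).symm

namespace MvPolynomial

section Scaling

variable {ι R : Type*} [CommSemiring R]

theorem aeval_smul_X_monomial (c : R) (u : ι →₀ ℕ) (a : R) :
    aeval (fun i => c • X i) (monomial u a) = c ^ u.degree • monomial u a := by
  rw [aeval_monomial, Finsupp.prod]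
  simp only [Finsupp.degree_apply, monomial_eq, Algebra.smul_def, algebraMap_eq, Finsupp.prod,
    mul_pow, Finset.prod_mul_distrib, ← Finset.prod_pow_eq_pow_sum, map_prod, map_pow]
  ring

theorem IsHomogeneous.aeval_smul_X {p : MvPolynomial ι R} {d : ℕ} (hp : p.IsHomogeneous d)
    (c : R) : MvPolynomial.aeval (fun i => c • X i) p = c ^ d • p := by
  conv_lhs => rw [p.as_sum]
  rw [map_sum]
  conv_rhs => rw [p.as_sum, Finset.smul_sum]
  refine Finset.sum_congr rfl fun u hu => ?_
  rw [aeval_smul_X_monomial, ← hp (mem_support_iff.mp hu), Finsupp.degree_eq_weight_one]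
  rfl

theorem eq_mul_of_isHomogeneous_one (D : MvPolynomial ι R →ₗ[R] MvPolynomial ι R)
    {w : MvPolynomial ι R} (hD : ∀ i, D (X i) = X i * w) {p : MvPolynomial ι R}
    (hp : p.IsHomogeneous 1) : D p = p * w := by
  have hspan : p ∈ Submodule.span R (Set.range X) := by
    rwa [← homogeneousSubmodule_one_eq_span_X]
  refine LinearMap.eqOn_span' (g := LinearMap.mulRight R w) ?_ hspan
  rintro _ ⟨i, rfl⟩
  exact hD i

end Scaling

section Sign

variable {ι R : Type*} [CommRing R]

theorem IsHomogeneous.aeval_neg_X {p : MvPolynomial ι R} {d : ℕ} (hp : p.IsHomogeneous d) :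
    MvPolynomial.aeval (fun i => -X i) p = (-1 : R) ^ d • p := by
  simpa only [neg_one_smul] using hp.aeval_smul_X (-1)

theorem aeval_neg_X_comm_of_isHomogeneous_one {F : Type*} [FunLike F (MvPolynomial ι R)
    (MvPolynomial ι R)] [AlgHomClass F R (MvPolynomial ι R) (MvPolynomial ι R)] {f : F}
    (hf : ∀ i, (f (X i)).IsHomogeneous 1) (a : MvPolynomial ι R) :
    aeval (fun i => -X i) (f a) = f (aeval (fun i => -X i) a) := by
  suffices (aeval fun i => -X i).comp (AlgHomClass.toAlgHom f) =
      (AlgHomClass.toAlgHom f).comp (aeval fun i => -X i) from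
    DFunLike.congr_fun this a
  refine algHom_ext fun i => ?_
  simp only [AlgHom.comp_apply, AlgHom.coe_coe, aeval_X, map_neg, (hf i).aeval_neg_X, pow_one,
    neg_one_smul]

variable (D : MvPolynomial ι R →ₗ[R] MvPolynomial ι R) {w : MvPolynomial ι R}
  (hLeib : ∀ (d : ℕ) (a b : MvPolynomial ι R), a.IsHomogeneous d →
      D (a * b) = D a * b + ((-1 : R) ^ d) • (a * D b))
  (hD : ∀ i, D (X i) = X i * w)
include hLeib hD

theorem two_smul_eq_mul_sub_aeval_neg_X (a : MvPolynomial ι R) :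
    (2 : R) • D a = w * (a - aeval (fun i => -X i) a) := by
  induction a using MvPolynomial.induction_on with
  | C c =>
    have hD1 : D 1 = 0 := by simpa using hLeib 0 1 1 (isHomogeneous_one _ _)
    rw [← mul_one (C c), ← smul_eq_C_mul, map_smul, hD1]
    simp
  | add p q hp hq =>
    rw [map_add, smul_add, hp, hq, map_add]
    ring
  | mul_X p i hp =>
    rw [mul_comm p, hLeib 1 (X i) p (isHomogeneous_X _ _), hD i, map_mul, aeval_X, pow_one,
      neg_one_smul]
    simp only [Algebra.smul_def, algebraMap_eq, map_ofNat] at hp ⊢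
    linear_combination (-X i) * hp

end Sign

section LinearSubst

variable {ι R : Type*} [CommSemiring R] [Fintype ι]

theorem linearCombination_X_injective :
    Function.Injective (Fintype.linearCombination R (X : ι → MvPolynomial ι R)) :=
  linearIndependent_iff_injective_fintypeLinearCombination.mp (linearIndependent_X ι R)

theorem isHomogeneous_linearCombination_X (c : ι → R) :
    (Fintype.linearCombination R X c : MvPolynomial ι R).IsHomogeneous 1 := by
  rw [← mem_homogeneousSubmodule, homogeneousSubmodule_one_eq_span_X,
    ← Fintype.range_linearCombination]
  exact LinearMap.mem_range_self _ c

variable [DecidableEq ι]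

noncomputable def linearSubst (g : (ι → R) →ₗ[R] ι → R) :
    MvPolynomial ι R →ₐ[R] MvPolynomial ι R :=
  aeval fun i => Fintype.linearCombination R X (g (Pi.single i 1))

theorem linearSubst_X (g : (ι → R) →ₗ[R] ι → R) (i : ι) :
    linearSubst g (X i) = Fintype.linearCombination R X (g (Pi.single i 1)) :=
  aeval_X _ i

theorem linearSubst_linearCombination_X (g : (ι → R) →ₗ[R] ι → R) (c : ι → R) :
    linearSubst g (Fintype.linearCombination R X c) = Fintype.linearCombination R X (g c) := by
  suffices (linearSubst g).toLinearMap ∘ₗ Fintype.linearCombination R X =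
      Fintype.linearCombination R X ∘ₗ g from LinearMap.congr_fun this c
  refine LinearMap.pi_ext' fun i => LinearMap.ext_ring ?_
  simp [Fintype.linearCombination_apply_single, linearSubst_X]

theorem linearSubst_comp (g h : (ι → R) →ₗ[R] ι → R) :
    (linearSubst g).comp (linearSubst h) = linearSubst (g ∘ₗ h) :=
  algHom_ext fun i => by
    simp only [AlgHom.comp_apply, linearSubst_X, linearSubst_linearCombination_X,
      LinearMap.comp_apply]

theorem linearSubst_id :
    linearSubst (LinearMap.id : (ι → R) →ₗ[R] ι → R) = AlgHom.id R _ :=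
  algHom_ext fun i => by simp [linearSubst_X, Fintype.linearCombination_apply_single]

noncomputable def linearSubstEquiv (g : (ι → R) ≃ₗ[R] ι → R) :
    MvPolynomial ι R ≃ₐ[R] MvPolynomial ι R :=
  AlgEquiv.ofAlgHom (linearSubst g) (linearSubst g.symm)
    (by
      rw [linearSubst_comp, LinearEquiv.comp_coe, LinearEquiv.symm_trans_self]
      exact linearSubst_id)
    (by
      rw [linearSubst_comp, LinearEquiv.comp_coe, LinearEquiv.self_trans_symm]
      exact linearSubst_id)

theorem linearSubstEquiv_apply (g : (ι → R) ≃ₗ[R] ι → R) (p : MvPolynomial ι R) :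
    linearSubstEquiv g p = linearSubst g p :=
  rfl

theorem isHomogeneous_linearSubstEquiv_X (g : (ι → R) ≃ₗ[R] ι → R) (i : ι) :
    (linearSubstEquiv g (X i)).IsHomogeneous 1 := by
  rw [linearSubstEquiv_apply, linearSubst_X]
  exact isHomogeneous_linearCombination_X _

end LinearSubst

section DGIso

variable {ι : Type*}

theorem map_linearCombination_X_eq {R : Type*} [CommRing R] [IsDomain R] [Fintype ι]
    {f : MvPolynomial ι R ≃ₐ[R] MvPolynomial ι R} (hf : ∀ i, (f (X i)).IsHomogeneous 1)
    {D D' : MvPolynomial ι R →ₗ[R] MvPolynomial ι R} {t t' : ι → R}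
    (hD : ∀ i, D (X i) = X i * Fintype.linearCombination R X t)
    (hD' : ∀ i, D' (X i) = X i * Fintype.linearCombination R X t')
    (hfD : ∀ a, f (D a) = D' (f a)) :
    f (Fintype.linearCombination R X t) = Fintype.linearCombination R X t' := by
  cases isEmpty_or_nonempty ι with
  | inl _ => simp only [Subsingleton.elim t 0, Subsingleton.elim t' 0, map_zero]
  | inr _ =>
    obtain ⟨i⟩ : Nonempty ι := inferInstance
    have hXi : f (X i) ≠ 0 := (map_ne_zero_iff f f.injective).mpr (X_ne_zero i)
    refine mul_left_cancel₀ hXi ?_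
    rw [← map_mul, ← hD, hfD, eq_mul_of_isHomogeneous_one D' hD' (hf i)]

theorem map_apply_eq_of_map_eq {k : Type*} [Field k] [CharZero k]
    {f : MvPolynomial ι k ≃ₐ[k] MvPolynomial ι k} (hf : ∀ i, (f (X i)).IsHomogeneous 1)
    {D D' : MvPolynomial ι k →ₗ[k] MvPolynomial ι k} {w w' : MvPolynomial ι k}
    (hLeib : ∀ (d : ℕ) (a b : MvPolynomial ι k), a.IsHomogeneous d →
      D (a * b) = D a * b + ((-1 : k) ^ d) • (a * D b))
    (hLeib' : ∀ (d : ℕ) (a b : MvPolynomial ι k), a.IsHomogeneous d →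
      D' (a * b) = D' a * b + ((-1 : k) ^ d) • (a * D' b))
    (hD : ∀ i, D (X i) = X i * w) (hD' : ∀ i, D' (X i) = X i * w') (hfw : f w = w')
    (a : MvPolynomial ι k) : f (D a) = D' (f a) := by
  refine smul_right_injective _ (two_ne_zero : (2 : k) ≠ 0) ?_
  calc (2 : k) • f (D a) = f ((2 : k) • D a) := (map_smul f _ _).symm
    _ = w' * (f a - aeval (fun i => -X i) (f a)) := by
      rw [two_smul_eq_mul_sub_aeval_neg_X D hLeib hD, map_mul, map_sub, hfw,
        aeval_neg_X_comm_of_isHomogeneous_one hf]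
    _ = (2 : k) • D' (f a) := (two_smul_eq_mul_sub_aeval_neg_X D' hLeib' hD' _).symm

end DGIso

end MvPolynomial

open MvPolynomial

/-- Two DG polynomial algebras `(A, D)` (parameters `t`) and `(A, D')`
(parameters `t'`) are DG-isomorphic if and only if (`t = 0 ↔ t' = 0`). -/
theorem stmt_3 (k : Type*) [Field k] [CharZero k] (n : ℕ) (t t' : Fin n → k)
    (D D' : MvPolynomial (Fin n) k →ₗ[k] MvPolynomial (Fin n) k)
    (hLeib : ∀ (d : ℕ) (a b : MvPolynomial (Fin n) k), a.IsHomogeneous d →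
      D (a * b) = D a * b + ((-1 : k) ^ d) • (a * D b))
    (hLeib' : ∀ (d : ℕ) (a b : MvPolynomial (Fin n) k), a.IsHomogeneous d →
      D' (a * b) = D' a * b + ((-1 : k) ^ d) • (a * D' b))
    (hD : ∀ i : Fin n, D (X i) = X i * ∑ j : Fin n, t j • X j)
    (hD' : ∀ i : Fin n, D' (X i) = X i * ∑ j : Fin n, t' j • X j) :
    (∃ f : MvPolynomial (Fin n) k ≃ₐ[k] MvPolynomial (Fin n) k,
        (∀ i : Fin n, (f (X i)).IsHomogeneous 1) ∧
        (∀ a : MvPolynomial (Fin n) k, f (D a) = D' (f a))) ↔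
    (t = 0 ↔ t' = 0) := by
  simp only [← Fintype.linearCombination_apply] at hD hD'
  have hL (s : Fin n → k) : Fintype.linearCombination k X s = 0 ↔ s = 0 :=
    map_eq_zero_iff _ linearCombination_X_injective
  constructor
  · rintro ⟨f, hf, hfD⟩
    rw [← hL, ← hL, ← map_linearCombination_X_eq hf hD hD' hfD, map_eq_zero_iff f f.injective]
  · intro h
    obtain ⟨g, hg⟩ := exists_linearEquiv_apply_eq_of_eq_zero_iff (K := k) h
    refine ⟨linearSubstEquiv g, isHomogeneous_linearSubstEquiv_X g,
      map_apply_eq_of_map_eq (isHomogeneous_linearSubstEquiv_X g) hLeib hLeib' hD hD' ?_⟩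
    rw [linearSubstEquiv_apply, linearSubst_linearCombination_X, LinearEquiv.coe_coe, hg]
end

section
/- Let t : Fin n → k and let D : A → A be a k-linear map satisfying the graded Leibniz rule with D(x_i) = x_i * w_t for all i ∈ Fin n. Let M be an invertible n×n matrix over k and let f : A →ₐ[k] A be the k-algebra endomorphism determined by f(x_i) = ∑_{j} M i j • x_j for all i. Then f ∘ D = D ∘ f if and only if ∑_{j} t j * M j s = t s for all s ∈ Fin n. -/
/-!
On a homogeneous polynomial of degree `d`, a graded-Leibniz map `D` with `D (X i) = X i * w`
is multiplication by `w` for odd `d` and zero for even `d`: the Leibniz rule with `a = X i`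
gives `D (X i * a) = X i * w * a - X i * D a`, which flips the parity. Hence a degree-preserving
algebra endomorphism `f` commutes with `D` exactly when `f w = w` (for the forward direction,
cancel `f (X i) ≠ 0` in `f (X i) * f w = f (X i) * w`). The linear substitution given by `M`
sends `∑ j, t j • X j` to `∑ s, (∑ j, t j * M j s) • X s`, and invertibility of `M` makes every
`f (X i)` nonzero.
-/

open MvPolynomial

namespace MvPolynomial

variable {σ R : Type*} [CommRing R]

theorem IsHomogeneous.map_algHom {f : MvPolynomial σ R →ₐ[R] MvPolynomial σ R}
    (hf : ∀ i, (f (X i)).IsHomogeneous 1) {d : ℕ} {a : MvPolynomial σ R}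
    (ha : a.IsHomogeneous d) : (f a).IsHomogeneous d := by
  simpa [← aeval_unique] using ha.aeval (f ∘ X) hf

theorem isHomogeneous_sum_smul_X [Fintype σ] (c : σ → R) :
    (∑ i, c i • X i : MvPolynomial σ R).IsHomogeneous 1 :=
  IsHomogeneous.sum _ _ _ fun i _ => smul_eq_C_mul (X i) (c i) ▸ isHomogeneous_C_mul_X (c i) i

theorem sum_smul_X_eq_zero_iff [Fintype σ] {c : σ → R} :
    (∑ i, c i • X i : MvPolynomial σ R) = 0 ↔ c = 0 := by
  refine ⟨fun h => ?_, fun h => by simp [h]⟩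
  ext i
  exact Fintype.linearIndependent_iff.mp (linearIndependent_X σ R) c h i

def IsGradedLeibniz (D : MvPolynomial σ R →ₗ[R] MvPolynomial σ R) : Prop :=
  ∀ (d : ℕ) (a b : MvPolynomial σ R), a.IsHomogeneous d →
    D (a * b) = D a * b + ((-1 : R) ^ d) • (a * D b)

namespace IsGradedLeibniz

variable {D : MvPolynomial σ R →ₗ[R] MvPolynomial σ R} {w : MvPolynomial σ R}

theorem map_one (hD : IsGradedLeibniz D) : D 1 = 0 := by
  simpa using hD 0 1 1 (isHomogeneous_one σ R)

theorem map_C (hD : IsGradedLeibniz D) (c : R) : D (C c) = 0 := by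
  rw [C_eq_smul_one, map_smul, hD.map_one, smul_zero]

theorem map_X_mul (hD : IsGradedLeibniz D) (hX : ∀ i, D (X i) = X i * w) {d : ℕ}
    {a : MvPolynomial σ R} (hDa : D a = if Odd d then a * w else 0) (i : σ) :
    D (X i * a) = if Odd (d + 1) then X i * a * w else 0 := by
  rw [hD 1 _ _ (isHomogeneous_X R i), hX, hDa, pow_one, neg_one_smul]
  simp only [Nat.odd_add_one]
  split_ifs <;> ring

theorem exists_isHomogeneous_map_monomial (hD : IsGradedLeibniz D)
    (hX : ∀ i, D (X i) = X i * w) (s : σ →₀ ℕ) (c : R) :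
    ∃ d, (monomial s c).IsHomogeneous d ∧
      D (monomial s c) = if Odd d then monomial s c * w else 0 := by
  refine induction_on_monomial
    (motive := fun p => ∃ d, p.IsHomogeneous d ∧ D p = if Odd d then p * w else 0)
    (fun c => ⟨0, isHomogeneous_C σ c, by simp [hD.map_C]⟩)
    (fun p i ⟨d, hp, hDp⟩ => ?_) s c
  rw [mul_comm]
  exact ⟨d + 1, by simpa [add_comm] using (isHomogeneous_X R i).mul hp, hD.map_X_mul hX hDp i⟩

theorem map_of_isHomogeneous (hD : IsGradedLeibniz D) (hX : ∀ i, D (X i) = X i * w) {d : ℕ}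
    {a : MvPolynomial σ R} (ha : a.IsHomogeneous d) :
    D a = if Odd d then a * w else 0 := by
  induction ha using IsWeightedHomogeneous.induction_on with
  | zero => simp
  | add p q _ _ hp hq => simp [hp, hq, add_mul, ite_add_ite]
  | monomial s c hs =>
    rcases eq_or_ne c 0 with rfl | hc
    · simp
    obtain ⟨e, he, hDe⟩ := hD.exists_isHomogeneous_map_monomial hX s c
    have hs' : (monomial s c).IsHomogeneous d := isWeightedHomogeneous_monomial 1 s c hs
    rwa [he.inj_right hs' (monomial_eq_zero.not.mpr hc)] at hDe

theorem map_algHom_eq_of_commute_X [IsDomain R] (hD : IsGradedLeibniz D)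
    (hX : ∀ i, D (X i) = X i * w) {f : MvPolynomial σ R →ₐ[R] MvPolynomial σ R}
    {i : σ} (hfi : (f (X i)).IsHomogeneous 1) (hfi0 : f (X i) ≠ 0)
    (hcomm : f (D (X i)) = D (f (X i))) : f w = w := by
  rw [hX, map_mul, hD.map_of_isHomogeneous hX hfi, if_pos odd_one] at hcomm
  exact mul_left_cancel₀ hfi0 hcomm

theorem commute_algHom_of_map_eq (hD : IsGradedLeibniz D) (hX : ∀ i, D (X i) = X i * w)
    {f : MvPolynomial σ R →ₐ[R] MvPolynomial σ R} (hf : ∀ i, (f (X i)).IsHomogeneous 1)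
    (hfw : f w = w) (a : MvPolynomial σ R) : f (D a) = D (f a) := by
  induction a using induction_on' with
  | monomial s c =>
    have hs := isHomogeneous_monomial (R := R) c (rfl : s.degree = s.degree)
    rw [hD.map_of_isHomogeneous hX hs, hD.map_of_isHomogeneous hX (hs.map_algHom hf)]
    split_ifs <;> simp [hfw]
  | add p q hp hq => simp only [map_add, hp, hq]

end IsGradedLeibniz

end MvPolynomial

theorem stmt_4_general (k : Type*) [Field k] (n : ℕ) (t : Fin n → k)
    (D : MvPolynomial (Fin n) k →ₗ[k] MvPolynomial (Fin n) k)
    (hLeib : ∀ (d : ℕ) (a b : MvPolynomial (Fin n) k), a.IsHomogeneous d →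
      D (a * b) = D a * b + ((-1 : k) ^ d) • (a * D b))
    (hD : ∀ i : Fin n, D (X i) = X i * ∑ j : Fin n, t j • X j)
    (M : Matrix (Fin n) (Fin n) k) (hM : IsUnit M)
    (f : MvPolynomial (Fin n) k →ₐ[k] MvPolynomial (Fin n) k)
    (hf : ∀ i : Fin n, f (X i) = ∑ j : Fin n, M i j • X j) :
    (∀ a : MvPolynomial (Fin n) k, f (D a) = D (f a)) ↔
    (∀ s : Fin n, ∑ j : Fin n, t j * M j s = t s) := by
  have hfX : ∀ i, (f (X i)).IsHomogeneous 1 := fun i => hf i ▸ isHomogeneous_sum_smul_X (M i)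
  have hfw : f (∑ j, t j • X j) = ∑ s, (∑ j, t j * M j s) • X s := by
    simp_rw [map_sum, map_smul, hf, Finset.smul_sum, smul_smul]
    rw [Finset.sum_comm]
    simp_rw [← Finset.sum_smul]
  constructor
  · intro hcomm s
    have hfX0 : f (X s) ≠ 0 := by
      rw [hf, Ne, sum_smul_X_eq_zero_iff]
      intro hrow
      exact ((Matrix.isUnit_iff_isUnit_det M).mp hM).ne_zero
        (Matrix.det_eq_zero_of_row_eq_zero s (congrFun hrow))
    have hfixed := IsGradedLeibniz.map_algHom_eq_of_commute_X hLeib hD (hfX s) hfX0 (hcomm _)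
    exact (linearIndependent_X (Fin n) k).eq_coords_of_eq (hfw ▸ hfixed) s
  · intro hsum
    refine IsGradedLeibniz.commute_algHom_of_map_eq hLeib hD hfX ?_
    simp [hfw, hsum]

/-- For an invertible matrix `M` and the algebra endomorphism `f` of
`k[x_1,…,x_n]` determined by `f (X i) = ∑ j, M i j • X j`, `f` commutes with the
differential `D` of `A(t)` if and only if `∑ j, t j * M j s = t s` for all `s`. -/
theorem stmt_4 (k : Type*) [Field k] [CharZero k] (n : ℕ) (t : Fin n → k)
    (D : MvPolynomial (Fin n) k →ₗ[k] MvPolynomial (Fin n) k)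
    (hLeib : ∀ (d : ℕ) (a b : MvPolynomial (Fin n) k), a.IsHomogeneous d →
      D (a * b) = D a * b + ((-1 : k) ^ d) • (a * D b))
    (hD : ∀ i : Fin n, D (X i) = X i * ∑ j : Fin n, t j • X j)
    (M : Matrix (Fin n) (Fin n) k) (hM : IsUnit M)
    (f : MvPolynomial (Fin n) k →ₐ[k] MvPolynomial (Fin n) k)
    (hf : ∀ i : Fin n, f (X i) = ∑ j : Fin n, M i j • X j) :
    (∀ a : MvPolynomial (Fin n) k, f (D a) = D (f a)) ↔
    (∀ s : Fin n, ∑ j : Fin n, t j * M j s = t s) :=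
  stmt_4_general k n t D hLeib hD M hM f hf
end

section
/- Assume n ≥ 1 and let D : A → A be a k-linear map satisfying the graded Leibniz rule with D(x_i) = x_1 * x_i for all i ∈ Fin n (the differential of the DG polynomial algebra A(1,0,…,0)). Then for every odd natural number d and every f ∈ A homogeneous of degree d, if D f = 0 then f = 0. In particular all odd-degree cohomology of A(1,0,…,0) in positive degrees vanishes. -/
/-!
On homogeneous polynomials of degree `d`, `D` acts as multiplication by `x₁` when `d` is odd
and as `0` when `d` is even. Degree `0` is the constants, killed by `D`; in degree `d + 1`
every polynomial is a sum of products `a * b` with `a` linear and `b` of degree `d`, and since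
`D a = x₁ a` the graded Leibniz rule gives `D (a * b) = x₁ a b - a D b`, which flips the parity.
So for odd `d` a cocycle `f` satisfies `x₁ f = D f = 0`, hence `f = 0` because `A` is a domain.
-/

namespace MvPolynomial

variable {σ R : Type*} [CommRing R]

def IsGradedDerivation (D : MvPolynomial σ R →ₗ[R] MvPolynomial σ R) : Prop :=
  ∀ (d : ℕ) (a b : MvPolynomial σ R), a.IsHomogeneous d →
    D (a * b) = D a * b + ((-1 : R) ^ d) • (a * D b)

theorem map_eq_mul_of_isHomogeneous_one {D : MvPolynomial σ R →ₗ[R] MvPolynomial σ R}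
    {p a : MvPolynomial σ R} (hX : ∀ i, D (X i) = p * X i) (ha : a.IsHomogeneous 1) :
    D a = p * a := by
  suffices Submodule.span R (Set.range X) ≤ LinearMap.ker (D - LinearMap.mulLeft R p) by
    rw [← mem_homogeneousSubmodule, homogeneousSubmodule_one_eq_span_X] at ha
    simpa [sub_eq_zero] using this ha
  rw [Submodule.span_le]
  rintro _ ⟨i, rfl⟩
  simp [hX i]

namespace IsGradedDerivation

variable {D : MvPolynomial σ R →ₗ[R] MvPolynomial σ R}

theorem map_one (hD : IsGradedDerivation D) : D 1 = 0 := by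
  have h := hD 0 1 1 (isHomogeneous_one σ R)
  simpa only [mul_one, one_mul, pow_zero, one_smul, left_eq_add] using h

theorem map_algebraMap (hD : IsGradedDerivation D) (r : R) : D (algebraMap R _ r) = 0 := by
  rw [Algebra.algebraMap_eq_smul_one, map_smul, hD.map_one, smul_zero]

theorem map_eq_ite_of_isHomogeneous (hD : IsGradedDerivation D) {p : MvPolynomial σ R}
    (hX : ∀ i, D (X i) = p * X i) {d : ℕ} {f : MvPolynomial σ R} (hf : f.IsHomogeneous d) :
    D f = if Odd d then p * f else 0 := by
  induction d generalizing f with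
  | zero =>
    rw [← mem_homogeneousSubmodule, homogeneousSubmodule_zero, Submodule.mem_one] at hf
    obtain ⟨r, rfl⟩ := hf
    rw [if_neg Nat.not_odd_zero, hD.map_algebraMap]
  | succ d ih =>
    suffices homogeneousSubmodule σ R (d + 1) ≤
        LinearMap.ker (D - LinearMap.mulLeft R (if Odd (d + 1) then p else 0)) by
      have := this hf
      split_ifs at this ⊢ <;> simpa [sub_eq_zero] using this
    rw [← homogeneousSubmodule_one_pow, pow_succ', homogeneousSubmodule_one_pow, Submodule.mul_le]
    intro a ha b hb
    have hDb := ih hb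
    simp only [LinearMap.mem_ker, LinearMap.sub_apply, LinearMap.mulLeft_apply, sub_eq_zero]
    rw [hD 1 a b ha, map_eq_mul_of_isHomogeneous_one hX ha, hDb]
    rcases Nat.even_or_odd d with hd | hd
    · simp [hd.add_one, Nat.not_odd_iff_even.mpr hd, mul_assoc]
    · simp only [pow_one, hd, Nat.not_odd_iff_even.mpr hd.add_one, ↓reduceIte, neg_smul, one_smul,
        zero_mul]
      ring

end IsGradedDerivation

end MvPolynomial

open MvPolynomial

theorem stmt_6_general (k : Type*) [Field k] (n : ℕ) (hn : 1 ≤ n)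
    (D : MvPolynomial (Fin n) k →ₗ[k] MvPolynomial (Fin n) k)
    (hLeib : ∀ (d : ℕ) (a b : MvPolynomial (Fin n) k), a.IsHomogeneous d →
      D (a * b) = D a * b + ((-1 : k) ^ d) • (a * D b))
    (hD : ∀ i : Fin n, D (X i) = X ⟨0, hn⟩ * X i) :
    ∀ d : ℕ, Odd d → ∀ f : MvPolynomial (Fin n) k, f.IsHomogeneous d →
      D f = 0 → f = 0 := by
  intro d hd f hf hDf
  have hX0f : X ⟨0, hn⟩ * f = 0 := by
    rw [← hDf, IsGradedDerivation.map_eq_ite_of_isHomogeneous hLeib hD hf, if_pos hd]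
  exact (mul_eq_zero.mp hX0f).resolve_left (X_ne_zero _)

/-- For the DG polynomial algebra `A(1,0,…,0)` (so `D (X i) = X 0 * X i`),
every homogeneous cocycle of odd degree is zero. -/
theorem stmt_6 (k : Type*) [Field k] [CharZero k] (n : ℕ) (hn : 1 ≤ n)
    (D : MvPolynomial (Fin n) k →ₗ[k] MvPolynomial (Fin n) k)
    (hLeib : ∀ (d : ℕ) (a b : MvPolynomial (Fin n) k), a.IsHomogeneous d →
      D (a * b) = D a * b + ((-1 : k) ^ d) • (a * D b))
    (hD : ∀ i : Fin n, D (X i) = X ⟨0, hn⟩ * X i) :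
    ∀ d : ℕ, Odd d → ∀ f : MvPolynomial (Fin n) k, f.IsHomogeneous d →
      D f = 0 → f = 0 :=
  stmt_6_general k n hn D hLeib hD
end
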